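/- Let ℍ denote the real quaternions, let m ≤ n be natural numbers, and equip ℍ^k with the ℓ² norm of PiLp 2 (fun _ : Fin k => ℍ). Let ι : ℍ^m →ₗᵢ[ℍ] ℍ^n be the standard inclusion, given by (ι x) i = x ⟨i, h⟩ if h : (i : ℕ) < m and (ι x) i = 0 otherwise. Consider the action of the group G(n) of ℍ-linear isometric equivalences of ℍ^n on ℍ-linear isometries by postcomposition. Then the stabilizer subgroup { e ∈ G(n) | e ∘ ι = ι } is isomorphic, as a group, to the group G(n−m) of ℍ-linear isometric equivalences of ℍ^{n−m}. -/

import Mathlib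

open Quaternion

/-- The stabilizer, inside the group of linear isometric equivalences of
`PiLp 2 (fun _ : Fin n => ℍ[ℝ])`, of a linear isometric embedding
`ι : PiLp 2 (fun _ : Fin m => ℍ[ℝ]) →ₗᵢ[ℍ[ℝ]] PiLp 2 (fun _ : Fin n => ℍ[ℝ])` under the
postcomposition action. -/
noncomputable def stabilizerOfInclusion {m n : ℕ}
    (ι : PiLp 2 (fun _ : Fin m => ℍ[ℝ]) →ₗᵢ[ℍ[ℝ]] PiLp 2 (fun _ : Fin n => ℍ[ℝ])) :
    Subgroup (PiLp 2 (fun _ : Fin n => ℍ[ℝ]) ≃ₗᵢ[ℍ[ℝ]] PiLp 2 (fun _ : Fin n => ℍ[ℝ])) where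
  carrier := { e | ⇑e ∘ ⇑ι = ⇑ι }
  one_mem' := by
    funext x
    simp
  mul_mem' := by
    intro a b ha hb
    funext x
    have hbx := congrFun hb x
    have hax := congrFun ha x
    simp only [Function.comp_apply] at hbx hax ⊢
    simp only [LinearIsometryEquiv.coe_mul, Function.comp_apply]
    rw [hbx]
    simpa using hax
  inv_mem' := by
    intro a ha
    funext x
    have hax := congrFun ha x
    simp only [Function.comp_apply] at hax ⊢
    simp only [LinearIsometryEquiv.coe_inv]
    have h2 : a.symm (a (ι x)) = ι x := a.symm_apply_apply _
    rw [hax] at h2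
    exact h2

/-!
Splitting `ℍⁿ = ℍᵐ ⊕₂ ℍⁿ⁻ᵐ` turns `ι` into `x ↦ (x, 0)`. An isometry `e` fixing `ℍᵐ ⊕ 0`
pointwise also maps `0 ⊕ ℍⁿ⁻ᵐ` into itself: if `e (0, y) = (a, b)`, then `e (0, y)` is as far
from `(a, 0) = e (a, 0)` as `(0, y)` is, i.e. `‖b‖² = ‖a‖² + ‖y‖²`, while `‖a‖² + ‖b‖² = ‖y‖²`;
hence `a = 0`. So the stabilizer consists exactly of the block-diagonal isometries `id ⊕ f`.
-/

open WithLp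

namespace LinearIsometryEquiv

variable {R F G : Type*} [Semiring R] [SeminormedAddCommGroup F] [Module R F]
  [SeminormedAddCommGroup G] [Module R G]

def conjMulEquiv (Φ : F ≃ₗᵢ[R] G) : (F ≃ₗᵢ[R] F) ≃* (G ≃ₗᵢ[R] G) where
  toFun e := Φ.symm.trans (e.trans Φ)
  invFun e := Φ.trans (e.trans Φ.symm)
  left_inv e := by ext; simp
  right_inv e := by ext; simp
  map_mul' e f := by ext; simp

@[simp]
theorem conjMulEquiv_apply (Φ : F ≃ₗᵢ[R] G) (e : F ≃ₗᵢ[R] F) (x : G) :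
    conjMulEquiv Φ e x = Φ (e (Φ.symm x)) := rfl

end LinearIsometryEquiv

section BlockDiagonal

variable {R E K : Type*} [Semiring R] [NormedAddCommGroup E] [Module R E]
  [NormedAddCommGroup K] [Module R K]

variable (R E K) in
def blockDiagHom : (K ≃ₗᵢ[R] K) →* (WithLp 2 (E × K) ≃ₗᵢ[R] WithLp 2 (E × K)) where
  toFun f := LinearIsometryEquiv.withLpProdCongr 2 (LinearIsometryEquiv.refl R E) f
  map_one' := rfl
  map_mul' f g := by ext; simp

@[simp]
theorem blockDiagHom_apply (f : K ≃ₗᵢ[R] K) (v : WithLp 2 (E × K)) :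
    blockDiagHom R E K f v = toLp 2 (v.fst, f v.snd) := rfl

theorem blockDiagHom_injective : Function.Injective (blockDiagHom R E K) := by
  intro f g hfg
  ext y
  simpa using congr_arg (fun e => (e (toLp 2 ((0 : E), y))).snd) hfg

variable {e : WithLp 2 (E × K) ≃ₗᵢ[R] WithLp 2 (E × K)}

theorem fst_apply_toLp_zero_eq_zero (he : ∀ x, e (toLp 2 (x, 0)) = toLp 2 (x, 0)) (y : K) :
    (e (toLp 2 (0, y))).fst = 0 := by
  set v := e (toLp 2 (0, y)) with hv
  have hdist : ‖v - toLp 2 (v.fst, 0)‖ = ‖toLp 2 ((0 : E), y) - toLp 2 (v.fst, 0)‖ := by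
    conv_lhs => rw [hv, ← he, ← map_sub, e.norm_map]
  have hnorm : ‖v‖ = ‖toLp 2 ((0 : E), y)‖ := LinearIsometryEquiv.norm_map _ _
  rw [← sq_eq_sq₀ (norm_nonneg _) (norm_nonneg _)] at hdist hnorm
  simp only [prod_norm_sq_eq_of_L2, sub_fst, sub_snd, toLp_fst, toLp_snd, sub_self, sub_zero,
    zero_sub, norm_neg, norm_zero] at hdist hnorm
  have hsq : ‖v.fst‖ ^ 2 = 0 := by linarith
  exact norm_eq_zero.1 ((pow_eq_zero_iff two_ne_zero).1 hsq)

theorem apply_toLp_zero_eq (he : ∀ x, e (toLp 2 (x, 0)) = toLp 2 (x, 0)) (y : K) :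
    e (toLp 2 (0, y)) = toLp 2 (0, (e (toLp 2 (0, y))).snd) := by
  calc e (toLp 2 (0, y)) = toLp 2 ((e (toLp 2 (0, y))).fst, (e (toLp 2 (0, y))).snd) := rfl
    _ = _ := by rw [fst_apply_toLp_zero_eq_zero he y]

variable (e) in
noncomputable def restrictSnd (he : ∀ x, e (toLp 2 (x, 0)) = toLp 2 (x, 0)) : K →ₗᵢ[R] K where
  toFun y := (e (toLp 2 (0, y))).snd
  map_add' y z := by
    rw [← add_snd, ← map_add, ← toLp_add, Prod.mk_add_mk, add_zero]
  map_smul' c y := by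
    rw [RingHom.id_apply, ← smul_snd, ← map_smul, ← toLp_smul, Prod.smul_mk, smul_zero]
  norm_map' y := by
    change ‖(e (toLp 2 (0, y))).snd‖ = ‖y‖
    rw [← norm_toLp_snd 2 E K, ← apply_toLp_zero_eq he, e.norm_map, norm_toLp_snd]

theorem restrictSnd_surjective (he : ∀ x, e (toLp 2 (x, 0)) = toLp 2 (x, 0)) :
    Function.Surjective (restrictSnd e he) := by
  intro z
  have he' : ∀ x, e.symm (toLp 2 (x, 0)) = toLp 2 (x, 0) :=
    fun x => e.symm_apply_eq.2 (he x).symm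
  refine ⟨(e.symm (toLp 2 (0, z))).snd, ?_⟩
  change (e _).snd = z
  rw [← apply_toLp_zero_eq he' z, e.apply_symm_apply]
  rfl

theorem mem_range_blockDiagHom_iff :
    e ∈ (blockDiagHom R E K).range ↔ ∀ x, e (toLp 2 (x, 0)) = toLp 2 (x, 0) := by
  refine ⟨?_, fun he => ⟨.ofSurjective _ (restrictSnd_surjective he), ?_⟩⟩
  · rintro ⟨f, rfl⟩ x
    simp
  · ext1 v
    have hv : v = toLp 2 (v.fst, 0) + toLp 2 (0, v.snd) := by
      rw [← toLp_add, Prod.mk_add_mk, add_zero, zero_add]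
      rfl
    conv_rhs => rw [hv, map_add, he, apply_toLp_zero_eq he, ← toLp_add, Prod.mk_add_mk, add_zero,
      zero_add]
    rfl

end BlockDiagonal

namespace PiLp

variable (p : ENNReal) [Fact (1 ≤ p)] (𝕜 E : Type*) [Semiring 𝕜] [SeminormedAddCommGroup E]
  [Module 𝕜 E] {m n : ℕ}

noncomputable def finSplit (hmn : m ≤ n) :
    PiLp p (fun _ : Fin n => E) ≃ₗᵢ[𝕜]
      WithLp p (PiLp p (fun _ : Fin m => E) × PiLp p (fun _ : Fin (n - m) => E)) :=
  (LinearIsometryEquiv.piLpCongrLeft p 𝕜 E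
      ((finCongr (Nat.add_sub_cancel' hmn).symm).trans finSumFinEquiv.symm)).trans
    (sumPiLpEquivProdLpPiLp p (𝕜 := 𝕜) fun _ => E)

variable {p 𝕜 E}

theorem finSplit_symm_toLp_zero (hmn : m ≤ n) (x : PiLp p (fun _ : Fin m => E)) :
    (finSplit p 𝕜 E hmn).symm (toLp p (x, 0)) =
      toLp p fun i : Fin n => if h : (i : ℕ) < m then x ⟨i, h⟩ else 0 := by
  ext i
  simp only [finSplit, LinearIsometryEquiv.symm_trans, LinearIsometryEquiv.piLpCongrLeft_symm,
    Equiv.symm_trans, Equiv.symm_symm, finCongr_symm, LinearIsometryEquiv.trans_apply,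
    LinearIsometryEquiv.piLpCongrLeft_apply, Equiv.piCongrLeft'_apply, Equiv.trans_apply,
    finCongr_apply, sumPiLpEquivProdLpPiLp_symm_apply_ofLp, toLp_fst, toLp_snd, ofLp_zero]
  split_ifs with h
  · rw [show Fin.cast _ i = Fin.castAdd (n - m) ⟨i, h⟩ from rfl, finSumFinEquiv_symm_apply_castAdd]
  · rw [show Fin.cast _ i = Fin.natAdd m ⟨i - m, by omega⟩ from Fin.ext (by simp only [Fin.val_cast, Fin.val_natAdd]; omega),
      finSumFinEquiv_symm_apply_natAdd]
    rfl

end PiLp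

namespace LinearIsometryEquiv

variable {R E K F : Type*} [Semiring R] [NormedAddCommGroup E] [Module R E]
  [NormedAddCommGroup K] [Module R K] [SeminormedAddCommGroup F] [Module R F]

theorem mem_range_conj_blockDiagHom_iff {ι : E → F} {Φ : F ≃ₗᵢ[R] WithLp 2 (E × K)}
    (hΦ : ∀ x, Φ (ι x) = toLp 2 (x, 0)) (e : F ≃ₗᵢ[R] F) :
    e ∈ ((conjMulEquiv Φ).symm.toMonoidHom.comp (blockDiagHom R E K)).range ↔
      ∀ x, e (ι x) = ι x := by
  have hΦ' : ∀ x, Φ.symm (toLp 2 (x, 0)) = ι x := fun x => Φ.symm_apply_eq.2 (hΦ x).symm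
  rw [MonoidHom.range_comp, Subgroup.mem_map_equiv, MulEquiv.symm_symm,
    mem_range_blockDiagHom_iff]
  refine forall_congr' fun x => ?_
  rw [conjMulEquiv_apply, hΦ', ← hΦ, Φ.injective.eq_iff]

end LinearIsometryEquiv

/-- For `m ≤ n` and `ι` the standard inclusion `ℍ^m → ℍ^n`, the stabilizer of `ι` in
the group `G(n)` of linear isometric equivalences of `PiLp 2 (fun _ : Fin n => ℍ[ℝ])` (acting
by postcomposition) is isomorphic, as a group, to the group `G(n - m)` of linear
isometric equivalences of `PiLp 2 (fun _ : Fin (n - m) => ℍ[ℝ])`. -/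
theorem stabilizer_of_standard_inclusion_iso (m n : ℕ) (hmn : m ≤ n)
    (ι : PiLp 2 (fun _ : Fin m => ℍ[ℝ]) →ₗᵢ[ℍ[ℝ]] PiLp 2 (fun _ : Fin n => ℍ[ℝ]))
    (hι : ∀ (x : PiLp 2 (fun _ : Fin m => ℍ[ℝ])) (i : Fin n),
      ι x i = if h : (i : ℕ) < m then x ⟨(i : ℕ), h⟩ else 0) :
    Nonempty ((stabilizerOfInclusion ι) ≃*
      (PiLp 2 (fun _ : Fin (n - m) => ℍ[ℝ]) ≃ₗᵢ[ℍ[ℝ]] PiLp 2 (fun _ : Fin (n - m) => ℍ[ℝ]))) := by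
  set Φ := PiLp.finSplit 2 ℍ[ℝ] ℍ[ℝ] hmn
  have hΦ : ∀ x, Φ (ι x) = toLp 2 (x, 0) := fun x => by
    rw [← Φ.eq_symm_apply, PiLp.finSplit_symm_toLp_zero]
    exact PiLp.ext (hι x)
  set extend := (LinearIsometryEquiv.conjMulEquiv Φ).symm.toMonoidHom.comp
    (blockDiagHom ℍ[ℝ] (PiLp 2 (fun _ : Fin m => ℍ[ℝ])) (PiLp 2 (fun _ : Fin (n - m) => ℍ[ℝ])))
  have hinj : Function.Injective extend :=
    (LinearIsometryEquiv.conjMulEquiv Φ).symm.injective.comp blockDiagHom_injective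
  have hrange : extend.range = stabilizerOfInclusion ι := by
    ext e
    rw [LinearIsometryEquiv.mem_range_conj_blockDiagHom_iff hΦ]
    exact funext_iff.symm
  exact ⟨(MulEquiv.subgroupCongr hrange).symm.trans (MonoidHom.ofInjective hinj).symm⟩
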